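/- Every word over {a,b,c} (with moves a=(1,0), b=(0,1), c=(1,1)) from (p,q) to (r,s) has length at least max(r-p, s-q), and the unique word avoiding the factors ab, ba, ac, bc achieves this minimum length. -/

import Mathlib

/-!
Every move changes each coordinate by at most one, which gives the lower bound. An avoiding word
over {a,b,c} has the shape `c^k a^m` or `c^k b^m`, since after an `a` only `a` may follow and
after a `b` only `b`; such a word has length `k + m`, which is the larger coordinate of its
displacement `(k + m, k)` or `(k, k + m)`.
-/

/-- The 4-letter alphabet {a, b, c, x}. -/
inductive Ltr | a | b | c | x
deriving DecidableEq

/-- The forbidden two-letter factors: ab, ba, ac, bc. -/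
def forb : List (List Ltr) := [[.a, .b], [.b, .a], [.a, .c], [.b, .c]]

/-- `w` avoids all of ab, ba, ac, bc as factors. -/
def Avoids (w : List Ltr) : Prop := ∀ f ∈ forb, ¬ f <:+: w

/-- Moves on the 2-dimensional grid: a = (1,0), b = (0,1), c = (1,1), x = (1,1). -/
def mv : Ltr → ℕ × ℕ
  | .a => (1, 0)
  | .b => (0, 1)
  | .c => (1, 1)
  | .x => (1, 1)

/-- Total displacement of a word. -/
def disp (w : List Ltr) : ℕ × ℕ := (w.map mv).sum

/-- `w` is a word over {a,b,c} whose moves go from `(p,q)` to `(r,s)`. -/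
def Connects (p q r s : ℕ) (w : List Ltr) : Prop :=
  Ltr.x ∉ w ∧ p + (disp w).1 = r ∧ q + (disp w).2 = s

lemma disp_cons (ℓ : Ltr) (w : List Ltr) : disp (ℓ :: w) = mv ℓ + disp w := by
  simp [disp]

lemma disp_le_length_nsmul (w : List Ltr) : disp w ≤ w.length • (1, 1) := by
  simpa [disp] using List.sum_le_card_nsmul (w.map mv) (1, 1) (by
    simp only [List.mem_map]
    rintro _ ⟨ℓ, -, rfl⟩
    cases ℓ <;> decide)

lemma max_disp_le_length (w : List Ltr) : max (disp w).1 (disp w).2 ≤ w.length := by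
  simpa [Prod.le_def] using disp_le_length_nsmul w

lemma Avoids.of_infix {u w : List Ltr} (hw : Avoids w) (h : u <:+: w) : Avoids u :=
  fun f hf hfu => hw f hf (hfu.trans h)

lemma Avoids.of_cons {ℓ : Ltr} {w : List Ltr} (h : Avoids (ℓ :: w)) : Avoids w :=
  h.of_infix (List.suffix_cons ℓ w).isInfix

lemma Avoids.disp_cons_eq_nsmul {ℓ : Ltr} (hℓ : ℓ = .a ∨ ℓ = .b) {w : List Ltr}
    (hav : Avoids (ℓ :: w)) (hx : Ltr.x ∉ w) : disp (ℓ :: w) = (w.length + 1) • mv ℓ := by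
  induction w with
  | nil => simp [disp]
  | cons m w ih =>
    have hm : m = ℓ := by
      by_contra hne
      have hforb : [ℓ, m] ∈ forb := by
        rcases hℓ with rfl | rfl <;> cases m <;> simp_all [forb]
      exact hav _ hforb (List.prefix_append [ℓ, m] w).isInfix
    subst hm
    rw [disp_cons, ih hav.of_cons (fun h => hx (List.mem_cons_of_mem _ h)), List.length_cons,
      succ_nsmul' _ (w.length + 1)]

lemma Avoids.length_eq_max_disp {w : List Ltr} (hav : Avoids w) (hx : Ltr.x ∉ w) :
    w.length = max (disp w).1 (disp w).2 := by
  induction w with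
  | nil => simp [disp]
  | cons ℓ w ih =>
    have hxw : Ltr.x ∉ w := fun h => hx (List.mem_cons_of_mem _ h)
    cases ℓ with
    | c =>
      have := ih hav.of_cons hxw
      simp only [disp_cons, mv, Prod.fst_add, Prod.snd_add, List.length_cons]
      omega
    | a => simp [hav.disp_cons_eq_nsmul (.inl rfl) hxw, mv]
    | b => simp [hav.disp_cons_eq_nsmul (.inr rfl) hxw, mv]
    | x => simp at hx

theorem shortest_avoiding_path_general (p q r s : ℕ) :
    (∀ w : List Ltr, Connects p q r s w → max (r - p) (s - q) ≤ w.length) ∧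
    (∀ w : List Ltr, Connects p q r s w → Avoids w →
      w.length = max (r - p) (s - q)) := by
  refine ⟨fun w ⟨_, hr, hs⟩ => ?_, fun w ⟨hx, hr, hs⟩ hav => ?_⟩
  · simpa [← hr, ← hs] using max_disp_le_length w
  · simpa [← hr, ← hs] using hav.length_eq_max_disp hx

/-- Every word over {a,b,c} from `(p,q)` to `(r,s)` has length at least
`max (r-p) (s-q)`, and any word avoiding the factors ab, ba, ac, bc achieves
this minimum length. -/
theorem shortest_avoiding_path (p q r s : ℕ) (hp : p ≤ r) (hq : q ≤ s) :
    (∀ w : List Ltr, Connects p q r s w → max (r - p) (s - q) ≤ w.length) ∧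
    (∀ w : List Ltr, Connects p q r s w → Avoids w →
      w.length = max (r - p) (s - q)) :=
  shortest_avoiding_path_general p q r s
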